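/- Let 1 ≤ p ≤ 2 and 0 < α ≤ 1. Suppose that the α-snowflake of ℓ_p admits a bi-Lipschitz embedding into a Hilbert space, i.e. there exist a real Hilbert space H, a map T : ℓ_p → H, and constants A, B > 0 with A·‖x − y‖_p^α ≤ ‖T(x) − T(y)‖_H ≤ B·‖x − y‖_p^α for all x, y ∈ ℓ_p. Then α ≤ p/2. -/

import Mathlib

/-!
Enflo's argument. In a Hilbert space the two diagonals of a quadrilateral satisfy
`‖a - c‖² + ‖b - d‖² ≤ ‖a - b‖² + ‖b - c‖² + ‖c - d‖² + ‖d - a‖²` (the defect is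
`‖a - b + c - d‖²`); splitting the cube `{0,1}ⁿ` into two facets and inducting on `n` gives the
same inequality for the sum of squared long diagonals against the sum of squared edges.
The indicators `𝟙_t ∈ ℓ_p` realise the cube with `‖𝟙_t - 𝟙_u‖_p = |t ∆ u|^{1/p}`, so through the
snowflake embedding `2ⁿ A² n^{2α/p} ≤ n 2ⁿ B²` for every `n`, forcing `2α/p ≤ 1`.
-/

open Finset Filter
open scoped symmDiff ENNReal

section Hilbert

variable {H : Type*} [NormedAddCommGroup H] [InnerProductSpace ℝ H]

theorem norm_sub_sq_add_norm_sub_sq_le (a b c d : H) :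
    ‖a - c‖ ^ 2 + ‖b - d‖ ^ 2 ≤ ‖a - b‖ ^ 2 + ‖b - c‖ ^ 2 + ‖c - d‖ ^ 2 + ‖d - a‖ ^ 2 := by
  have h : ‖a - b‖ ^ 2 + ‖b - c‖ ^ 2 + ‖c - d‖ ^ 2 + ‖d - a‖ ^ 2
      - (‖a - c‖ ^ 2 + ‖b - d‖ ^ 2) = ‖a - b + c - d‖ ^ 2 := by
    simp only [← real_inner_self_eq_norm_sq, inner_sub_left, inner_sub_right, inner_add_left,
      inner_add_right]
    rw [real_inner_comm b a, real_inner_comm c a, real_inner_comm d a, real_inner_comm c b,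
      real_inner_comm d b, real_inner_comm d c]
    ring
  nlinarith [sq_nonneg ‖a - b + c - d‖]

end Hilbert

namespace Finset

variable {ι : Type*} [DecidableEq ι] {a i : ι} {t : Finset ι}

theorem symmDiff_singleton_of_notMem (ha : a ∉ t) : t ∆ {a} = insert a t := by
  ext x; simp only [mem_symmDiff, mem_singleton, mem_insert]; grind

theorem insert_symmDiff_singleton_self (ha : a ∉ t) : insert a t ∆ {a} = t := by
  ext x; simp only [mem_symmDiff, mem_singleton, mem_insert]; grind

theorem insert_symmDiff_singleton_of_ne (hia : i ≠ a) :
    insert a t ∆ {i} = insert a (t ∆ {i}) := by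
  ext x; simp only [mem_symmDiff, mem_singleton, mem_insert]; grind

theorem sum_powerset_sdiff {M : Type*} [AddCommMonoid M] (s : Finset ι) (F : Finset ι → M) :
    ∑ t ∈ s.powerset, F (s \ t) = ∑ t ∈ s.powerset, F t := by
  refine sum_nbij' (s \ ·) (s \ ·) ?_ ?_ ?_ ?_ ?_ <;>
    simp +contextual [sdiff_sdiff_right_self]

end Finset

section Cube

variable {ι H : Type*} [DecidableEq ι] [NormedAddCommGroup H]

def cubeDiagonalSum (s : Finset ι) (f : Finset ι → H) : ℝ :=
  ∑ t ∈ s.powerset, ‖f t - f (s \ t)‖ ^ 2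

def cubeEdgeSum (s : Finset ι) (f : Finset ι → H) : ℝ :=
  ∑ i ∈ s, ∑ t ∈ s.powerset, ‖f t - f (t ∆ {i})‖ ^ 2

variable {a : ι} {s : Finset ι}

theorem cubeDiagonalSum_insert (ha : a ∉ s) (f : Finset ι → H) :
    cubeDiagonalSum (insert a s) f =
      ∑ t ∈ s.powerset, ‖f t - f (insert a (s \ t))‖ ^ 2 +
        ∑ t ∈ s.powerset, ‖f (insert a t) - f (s \ t)‖ ^ 2 := by
  rw [cubeDiagonalSum, sum_powerset_insert ha]
  congr 1 <;> refine sum_congr rfl fun t ht => ?_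
  · rw [insert_sdiff_of_notMem _ fun h => ha (mem_powerset.1 ht h)]
  · rw [insert_sdiff_insert, sdiff_insert_of_notMem ha]

theorem cubeEdgeSum_insert (ha : a ∉ s) (f : Finset ι → H) :
    cubeEdgeSum (insert a s) f =
      2 * ∑ t ∈ s.powerset, ‖f t - f (insert a t)‖ ^ 2 + cubeEdgeSum s f +
        cubeEdgeSum s (fun t => f (insert a t)) := by
  have hat : ∀ t ∈ s.powerset, a ∉ t := fun t ht h => ha (mem_powerset.1 ht h)
  have hdir : ∑ t ∈ (insert a s).powerset, ‖f t - f (t ∆ {a})‖ ^ 2 =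
      2 * ∑ t ∈ s.powerset, ‖f t - f (insert a t)‖ ^ 2 := by
    rw [sum_powerset_insert ha, two_mul]
    congr 1 <;> refine sum_congr rfl fun t ht => ?_
    · rw [symmDiff_singleton_of_notMem (hat t ht)]
    · rw [insert_symmDiff_singleton_self (hat t ht), norm_sub_rev]
  have hother : ∀ i ∈ s, ∑ t ∈ (insert a s).powerset, ‖f t - f (t ∆ {i})‖ ^ 2 =
      ∑ t ∈ s.powerset, ‖f t - f (t ∆ {i})‖ ^ 2 +
        ∑ t ∈ s.powerset, ‖f (insert a t) - f (insert a (t ∆ {i}))‖ ^ 2 := fun i hi => by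
    rw [sum_powerset_insert ha]
    congr 1
    exact sum_congr rfl fun t _ => by
      rw [insert_symmDiff_singleton_of_ne (ne_of_mem_of_not_mem hi ha)]
  rw [cubeEdgeSum, sum_insert ha, hdir, sum_congr rfl hother, sum_add_distrib, add_assoc]
  rfl

theorem cubeDiagonalSum_le_cubeEdgeSum [InnerProductSpace ℝ H] (s : Finset ι)
    (f : Finset ι → H) : cubeDiagonalSum s f ≤ cubeEdgeSum s f := by
  induction s using Finset.induction generalizing f with
  | empty => simp [cubeDiagonalSum, cubeEdgeSum]
  | @insert a s ha ih =>
    have quad : ∑ t ∈ s.powerset, (‖f t - f (insert a (s \ t))‖ ^ 2 +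
          ‖f (insert a t) - f (s \ t)‖ ^ 2) ≤
        ∑ t ∈ s.powerset, (‖f t - f (insert a t)‖ ^ 2 +
          ‖f (insert a t) - f (insert a (s \ t))‖ ^ 2 +
          ‖f (insert a (s \ t)) - f (s \ t)‖ ^ 2 + ‖f (s \ t) - f t‖ ^ 2) :=
      sum_le_sum fun t _ => norm_sub_sq_add_norm_sub_sq_le _ _ _ _
    have hback : ∑ t ∈ s.powerset, ‖f (insert a (s \ t)) - f (s \ t)‖ ^ 2 =
        ∑ t ∈ s.powerset, ‖f t - f (insert a t)‖ ^ 2 := by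
      rw [sum_powerset_sdiff s fun u => ‖f (insert a u) - f u‖ ^ 2]
      simp_rw [norm_sub_rev (f (insert a _))]
    have hdiag : ∑ t ∈ s.powerset, ‖f (s \ t) - f t‖ ^ 2 = cubeDiagonalSum s f := by
      simp_rw [cubeDiagonalSum, norm_sub_rev (f (s \ _))]
    simp only [sum_add_distrib, hback, hdiag] at quad
    rw [cubeDiagonalSum_insert ha, cubeEdgeSum_insert ha]
    linarith [ih f, ih fun t => f (insert a t), show cubeDiagonalSum s (fun t => f (insert a t)) =
      ∑ t ∈ s.powerset, ‖f (insert a t) - f (insert a (s \ t))‖ ^ 2 from rfl]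

theorem sq_le_card_mul_sq_of_cube [InnerProductSpace ℝ H] {s : Finset ι} {f : Finset ι → H}
    {D L : ℝ} (hD : 0 ≤ D)
    (hdiag : ∀ t ⊆ s, D ≤ ‖f t - f (s \ t)‖)
    (hedge : ∀ t ⊆ s, ∀ i ∈ s, ‖f t - f (t ∆ {i})‖ ≤ L) :
    D ^ 2 ≤ #s * L ^ 2 := by
  have hlow : 2 ^ #s * D ^ 2 ≤ cubeDiagonalSum s f := by
    calc 2 ^ #s * D ^ 2 = ∑ _t ∈ s.powerset, D ^ 2 := by simp [sum_const, card_powerset]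
      _ ≤ cubeDiagonalSum s f :=
          sum_le_sum fun t ht => pow_le_pow_left₀ hD (hdiag t (mem_powerset.1 ht)) 2
  have hup : cubeEdgeSum s f ≤ 2 ^ #s * (#s * L ^ 2) := by
    calc cubeEdgeSum s f ≤ ∑ _i ∈ s, ∑ _t ∈ s.powerset, L ^ 2 :=
          sum_le_sum fun i hi => sum_le_sum fun t ht =>
            pow_le_pow_left₀ (norm_nonneg _) (hedge t (mem_powerset.1 ht) i hi) 2
      _ = 2 ^ #s * (#s * L ^ 2) := by
          simp only [sum_const, card_powerset, nsmul_eq_mul]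
          push_cast
          ring
  exact le_of_mul_le_mul_left ((hlow.trans (cubeDiagonalSum_le_cubeEdgeSum s f)).trans hup)
    (by positivity)

end Cube

theorem lp.sum_single_sub_sum_single {ι : Type*} [DecidableEq ι] (p : ℝ≥0∞) (t u : Finset ι)
    (c : ℝ) :
    ∑ i ∈ t, lp.single p i c - ∑ i ∈ u, lp.single p i c =
      ∑ i ∈ t ∆ u, lp.single p i (if i ∈ t then c else -c) := by
  rw [← sum_sdiff_sub_sum_sdiff, Finset.symmDiff_def, sum_union disjoint_sdiff_sdiff,
    sub_eq_add_neg, ← sum_neg_distrib]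
  congr 1 <;> refine sum_congr rfl fun i hi => ?_
  · rw [if_pos (mem_sdiff.1 hi).1]
  · rw [if_neg (mem_sdiff.1 hi).2, lp.single_neg]

theorem lp.norm_sum_single_one_sub {ι : Type*} [DecidableEq ι] {p : ℝ≥0∞} (hp : 0 < p.toReal)
    (t u : Finset ι) :
    ‖∑ i ∈ t, lp.single p i (1 : ℝ) - ∑ i ∈ u, lp.single p i 1‖ = #(t ∆ u) ^ p.toReal⁻¹ := by
  have h := lp.norm_sum_single hp (fun i => if i ∈ t then (1 : ℝ) else -1) (t ∆ u)
  have hone : ∀ i, ‖(if i ∈ t then (1 : ℝ) else -1)‖ ^ p.toReal = 1 := fun i => by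
    split_ifs <;> simp
  simp only [hone, sum_const, nsmul_one] at h
  rw [lp.sum_single_sub_sum_single, ← h, Real.rpow_rpow_inv (lp.norm_nonneg' _) hp.ne']

theorem le_one_of_forall_natCast_rpow_le_mul {γ C : ℝ}
    (h : ∀ n : ℕ, 0 < n → (n : ℝ) ^ γ ≤ C * n) : γ ≤ 1 := by
  by_contra! hγ
  have hlim : Tendsto (fun n : ℕ => (n : ℝ) ^ (γ - 1)) atTop atTop :=
    (tendsto_rpow_atTop (sub_pos.2 hγ)).comp tendsto_natCast_atTop_atTop
  obtain ⟨n, hnC, hn⟩ := ((hlim.eventually_gt_atTop C).and (eventually_gt_atTop 0)).exists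
  have hnR : (0 : ℝ) < n := Nat.cast_pos.2 hn
  rw [Real.rpow_sub_one hnR.ne', lt_div_iff₀ hnR] at hnC
  linarith [h n hn]

theorem lp_snowflake_embedding_exponent_upper_bound_general
    (p α : ℝ) (hp1 : 1 ≤ p)
    (H : Type) [NormedAddCommGroup H] [InnerProductSpace ℝ H]
    (T : lp (fun _ : ℕ => ℝ) (ENNReal.ofReal p) → H)
    (A B : ℝ) (hA : 0 < A)
    (hT : ∀ x y : lp (fun _ : ℕ => ℝ) (ENNReal.ofReal p),
      A * ‖x - y‖ ^ α ≤ ‖T x - T y‖ ∧ ‖T x - T y‖ ≤ B * ‖x - y‖ ^ α) :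
    α ≤ p / 2 := by
  have hp : 0 < p := by linarith
  have hpR : (ENNReal.ofReal p).toReal = p := ENNReal.toReal_ofReal hp.le
  let x (t : Finset ℕ) := ∑ i ∈ t, lp.single (ENNReal.ofReal p) i (1 : ℝ)
  have hx (t u : Finset ℕ) : ‖x t - x u‖ = #(t ∆ u) ^ p⁻¹ := by
    rw [lp.norm_sum_single_one_sub (by rw [hpR]; exact hp), hpR]
  suffices 2 * α / p ≤ 1 by rwa [div_le_one hp, ← le_div_iff₀' two_pos] at this
  refine le_one_of_forall_natCast_rpow_le_mul (C := (B / A) ^ 2) fun n hn => ?_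
  have hnR : (0 : ℝ) ≤ n := n.cast_nonneg
  have hcube := sq_le_card_mul_sq_of_cube (s := range n) (f := fun t => T (x t))
    (D := A * ((n : ℝ) ^ p⁻¹) ^ α) (L := B) (by positivity)
    (fun t ht => by
      have h := (hT (x t) (x (range n \ t))).1
      rwa [hx, symmDiff_eq_union disjoint_sdiff, union_sdiff_of_subset ht, card_range] at h)
    (fun t _ i _ => by
      have h := (hT (x t) (x (t ∆ {i}))).2
      rwa [hx, symmDiff_symmDiff_cancel_left, card_singleton, Nat.cast_one, Real.one_rpow,
        Real.one_rpow, mul_one] at h)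
  have hpow : (((n : ℝ) ^ p⁻¹) ^ α) ^ 2 = (n : ℝ) ^ (2 * α / p) := by
    rw [← Real.rpow_mul hnR, ← Real.rpow_natCast, ← Real.rpow_mul hnR]
    ring_nf
  rw [card_range, mul_pow, hpow] at hcube
  rw [div_pow, div_mul_eq_mul_div, le_div_iff₀ (by positivity)]
  linarith

/-- For `1 ≤ p ≤ 2` and `0 < α ≤ 1`: if the `α`-snowflake of `ℓ_p` admits
a bi-Lipschitz embedding into a Hilbert space, i.e. there are a real Hilbert space `H`,
a map `T : ℓ_p → H`, and constants `A, B > 0` with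
`A·‖x-y‖_p^α ≤ ‖T x - T y‖ ≤ B·‖x-y‖_p^α` for all `x, y ∈ ℓ_p`, then `α ≤ p/2`. -/
theorem lp_snowflake_embedding_exponent_upper_bound
    (p α : ℝ) (hp1 : 1 ≤ p) (hp2 : p ≤ 2) (hα0 : 0 < α) (hα1 : α ≤ 1)
    (H : Type) [NormedAddCommGroup H] [InnerProductSpace ℝ H] [CompleteSpace H]
    (T : lp (fun _ : ℕ => ℝ) (ENNReal.ofReal p) → H)
    (A B : ℝ) (hA : 0 < A) (hB : 0 < B)
    (hT : ∀ x y : lp (fun _ : ℕ => ℝ) (ENNReal.ofReal p),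
      A * ‖x - y‖ ^ α ≤ ‖T x - T y‖ ∧ ‖T x - T y‖ ≤ B * ‖x - y‖ ^ α) :
    α ≤ p / 2 :=
  lp_snowflake_embedding_exponent_upper_bound_general p α hp1 H T A B hA hT
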